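/- arXiv:2605.08362 — 5 statements merged into one kernel-verified Lean document; each statement's English description precedes it below -/
import Mathlib

section
/- Let A ∈ ℝ^{m×m} be symmetric positive definite with condition number κ = λ_max(A)/λ_min(A), and let y ∈ ℝ^m be nonzero. Let W_k ∈ ℝ^{m×k} have orthonormal columns spanning the Krylov subspace K_k(A, y), with first column y/‖y‖₂ (so that W_kᵀ y = ‖y‖₂ e₁), and set T_k = W_kᵀ A W_k. Then 0 ≤ (yᵀ A⁻¹ y − ‖y‖₂² (T_k⁻¹)₁₁) / (yᵀ A⁻¹ y) ≤ 4 ((√κ − 1)/(√κ + 1))^{2k}, where (T_k⁻¹)₁₁ = e₁ᵀ T_k⁻¹ e₁. -/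
open Matrix

/-- Euclidean norm of a vector in `ℝ^m`. -/
noncomputable def euclNorm {m : ℕ} (y : Fin m → ℝ) : ℝ :=
  Real.sqrt (y ⬝ᵥ y)

/-- The `A`-norm `‖v‖_A = √(vᵀ A v)`. -/
noncomputable def anorm {m : ℕ} (A : Matrix (Fin m) (Fin m) ℝ) (v : Fin m → ℝ) : ℝ :=
  Real.sqrt (v ⬝ᵥ A *ᵥ v)

/-- The range (column span) of a matrix `W ∈ ℝ^{m×r}`. -/
def colSpan {m r : ℕ} (W : Matrix (Fin m) (Fin r) ℝ) : Submodule ℝ (Fin m → ℝ) :=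
  Submodule.span ℝ (Set.range Wᵀ)

/-- The block Krylov subspace `K_k(A, Z)`, the span of the columns of
`Z, AZ, …, A^{k-1} Z`. -/
def krylov {m b : ℕ} (k : ℕ) (A : Matrix (Fin m) (Fin m) ℝ)
    (Z : Matrix (Fin m) (Fin b) ℝ) : Submodule ℝ (Fin m → ℝ) :=
  Submodule.span ℝ (⋃ j ∈ Finset.range k, Set.range (A ^ j * Z)ᵀ)

/-- The Krylov subspace `K_k(A, y)` for a vector `y`, the span of
`y, Ay, …, A^{k-1} y`. -/
def krylovVec {m : ℕ} (k : ℕ) (A : Matrix (Fin m) (Fin m) ℝ)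
    (y : Fin m → ℝ) : Submodule ℝ (Fin m → ℝ) :=
  Submodule.span ℝ {v | ∃ j < k, v = (A ^ j) *ᵥ y}

/-- Condition number: ratio of the largest to the smallest eigenvalue
(for a symmetric positive definite matrix, the spectrum is the set of its eigenvalues). -/
noncomputable def condNum {m : ℕ} (A : Matrix (Fin m) (Fin m) ℝ) : ℝ :=
  sSup (spectrum ℝ A) / sInf (spectrum ℝ A)

/-- `Trace(log M) = log (det M)` for a symmetric positive definite matrix `M`. -/
noncomputable def traceLog {n : ℕ} (M : Matrix (Fin n) (Fin n) ℝ) : ℝ :=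
  Real.log M.det

/-- The eigenvalues of a symmetric matrix, sorted in decreasing order:
`eigDesc M i` is the `i`-th largest eigenvalue of `M` (`i` is 0-based). -/
noncomputable def eigDesc {m : ℕ} (M : Matrix (Fin m) (Fin m) ℝ) : Fin m → ℝ :=
  open scoped Classical in
  if h : M.IsHermitian then fun i => (h.eigenvalues ∘ Tuple.sort h.eigenvalues) i.rev
  else 0

/-!
Put `x = A⁻¹ y` and let `x_k = W T_k⁻¹ Wᵀ y` be the Galerkin approximation of `x` from
`K_k(A, y)`. Galerkin orthogonality gives `yᵀ A⁻¹ y - ‖y‖² (T_k⁻¹)₁₁ = ‖x - x_k‖_A²` and makes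
`x_k` the best `A`-norm approximation of `x` from `K_k(A, y)`. For a polynomial `p` with
`deg p ≤ k` and `p(0) = 1`, the vector `x - p(A) x` lies in `K_k(A, y)`, so
`‖x - x_k‖_A ≤ max_{λ ∈ σ(A)} |p(λ)| · ‖x‖_A`, and `‖x‖_A² = yᵀ A⁻¹ y`. A Chebyshev polynomial
transplanted from `[-1, 1]` to `[λ_min, λ_max]` and normalised at `0` makes this maximum at most
`2 ((√κ - 1)/(√κ + 1))^k`.
-/

open Polynomial

lemma exists_poly_eval_zero_eq_one_abs_le_of_lt (k : ℕ) {a b : ℝ} (ha : 0 < a) (hab : a < b) :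
    ∃ p : ℝ[X], p.natDegree ≤ k ∧ p.eval 0 = 1 ∧
      ∀ t ∈ Set.Icc a b, |p.eval t| ≤ 2 * ((√(b / a) - 1) / (√(b / a) + 1)) ^ k := by
  set s := √(b / a)
  have hb : b = a * s ^ 2 := by
    rw [Real.sq_sqrt (div_pos (ha.trans hab) ha).le, mul_div_cancel₀ _ ha.ne']
  have hs1 : 1 < s := Real.lt_sqrt zero_le_one |>.mpr (by rw [one_pow, one_lt_div ha]; exact hab)
  set ρ := (s - 1) / (s + 1)
  have hρ : 0 < ρ := div_pos (by linarith) (by linarith)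
  have hρk : 0 < ρ ^ k := pow_pos hρ k
  have hba : 0 < b - a := by linarith
  set σ := (b + a) / (b - a)
  -- `t ↦ σ - 2 t / (b - a)` maps `[a, b]` onto `[-1, 1]` and `0` to `σ = cosh (log ρ) > 1`
  have hσ : σ = Real.cosh (Real.log ρ) := by
    have h1 : s - 1 ≠ 0 := by linarith
    have h2 : s + 1 ≠ 0 := by linarith
    have h3 : s ^ 2 - 1 ≠ 0 := by nlinarith
    rw [Real.cosh_log hρ]
    simp only [σ, ρ, hb]
    field_simp
    ring
  set τ := (Chebyshev.T ℝ k).eval σ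
  have hτ : (ρ ^ k)⁻¹ / 2 ≤ τ := by
    have : τ = (ρ ^ k + (ρ ^ k)⁻¹) / 2 := by
      rw [← Real.cosh_log hρk, Real.log_pow,
        show (k : ℝ) = ((k : ℤ) : ℝ) by norm_cast, ← Chebyshev.T_real_cosh, ← hσ]
    rw [this]
    gcongr
    linarith
  have hτ0 : 0 < τ := lt_of_lt_of_le (by positivity) hτ
  refine ⟨C τ⁻¹ * (Chebyshev.T ℝ k).comp (C σ - C (2 / (b - a)) * X), ?_, ?_, ?_⟩
  · refine natDegree_C_mul_le _ _ |>.trans <| natDegree_comp_le.trans ?_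
    rw [Chebyshev.natDegree_T, Int.natAbs_natCast]
    exact (Nat.mul_le_mul_left k (by compute_degree)).trans_eq (mul_one k)
  · simp [τ, hτ0.ne']
  · rintro t ⟨hat, htb⟩
    have hT : |(Chebyshev.T ℝ k).eval (σ - 2 / (b - a) * t)| ≤ 1 := by
      have : σ - 2 / (b - a) * t = (b + a - 2 * t) / (b - a) := by
        simp only [σ]; field_simp
      exact Chebyshev.abs_eval_T_real_le_one _ (by
        rw [this, abs_div, abs_of_pos hba, div_le_one hba, abs_le]; constructor <;> linarith)
    simp only [eval_mul, eval_C, eval_comp, eval_sub, eval_X, abs_mul, abs_inv, abs_of_pos hτ0]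
    calc τ⁻¹ * _ ≤ τ⁻¹ := mul_le_of_le_one_right (by positivity) hT
      _ ≤ ((ρ ^ k)⁻¹ / 2)⁻¹ := inv_anti₀ (by positivity) hτ
      _ = 2 * ρ ^ k := by rw [inv_div, div_inv_eq_mul]

lemma exists_poly_eval_zero_eq_one_abs_le (k : ℕ) {a b : ℝ} (ha : 0 < a) (hab : a ≤ b) :
    ∃ p : ℝ[X], p.natDegree ≤ k ∧ p.eval 0 = 1 ∧
      ∀ t ∈ Set.Icc a b, |p.eval t| ≤ 2 * ((√(b / a) - 1) / (√(b / a) + 1)) ^ k := by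
  rcases hab.lt_or_eq with hab | rfl
  · exact exists_poly_eval_zero_eq_one_abs_le_of_lt k ha hab
  refine ⟨(1 - C a⁻¹ * X) ^ k, ?_, by simp, ?_⟩
  · exact natDegree_pow_le.trans <| (Nat.mul_le_mul_left k (by compute_degree)).trans_eq (mul_one k)
  · rintro t ⟨h1, h2⟩
    obtain rfl : t = a := le_antisymm h2 h1
    have h0 : (0 : ℝ) ≤ 0 ^ k := pow_nonneg le_rfl k
    simp [div_self ha.ne', inv_mul_cancel₀ ha.ne']
    linarith

namespace Matrix

variable {n : Type*} [Fintype n]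

lemma IsHermitian.dotProduct_mulVec_comm {A : Matrix n n ℝ} (hA : A.IsHermitian) (u v : n → ℝ) :
    u ⬝ᵥ (A *ᵥ v) = v ⬝ᵥ (A *ᵥ u) := by
  rw [dotProduct_mulVec, ← mulVec_transpose, ← conjTranspose_eq_transpose_of_trivial, hA.eq,
    dotProduct_comm]

lemma PosSemidef.dotProduct_mulVec_le_add {A : Matrix n n ℝ} (hA : A.PosSemidef) {u v : n → ℝ}
    (h : v ⬝ᵥ (A *ᵥ u) = 0) : u ⬝ᵥ (A *ᵥ u) ≤ (u + v) ⬝ᵥ (A *ᵥ (u + v)) := by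
  have hv : 0 ≤ v ⬝ᵥ (A *ᵥ v) := by simpa using hA.dotProduct_mulVec_nonneg v
  have h' : u ⬝ᵥ (A *ᵥ v) = 0 := by rw [hA.isHermitian.dotProduct_mulVec_comm, h]
  simp only [mulVec_add, dotProduct_add, add_dotProduct, h, h']
  linarith

open scoped MatrixOrder in
lemma PosSemidef.dotProduct_aeval_mulVec_le [DecidableEq n] {A : Matrix n n ℝ} (hA : A.PosSemidef)
    (p : ℝ[X]) {c : ℝ} (hp : ∀ t ∈ spectrum ℝ A, |p.eval t| ≤ c) (x : n → ℝ) :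
    (aeval A p *ᵥ x) ⬝ᵥ (A *ᵥ (aeval A p *ᵥ x)) ≤ c ^ 2 * (x ⬝ᵥ (A *ᵥ x)) := by
  have hsa : IsSelfAdjoint A := hA.isHermitian
  have hB : aeval A p = cfc p.eval A := (cfc_polynomial p A).symm
  have hBT : (aeval A p)ᵀ = aeval A p := by
    simpa [hB, IsSelfAdjoint, star_eq_conjTranspose] using
      (cfc_predicate p.eval A : IsSelfAdjoint _)
  have hle : aeval A p * A * aeval A p ≤ c ^ 2 • A := by
    rw [hB]
    calc cfc p.eval A * A * cfc p.eval A = cfc (fun t => p.eval t * t * p.eval t) A := by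
          rw [cfc_mul .., cfc_mul .., cfc_id' ℝ A]
      _ ≤ cfc (fun t => c ^ 2 * t) A := by
          refine cfc_mono fun t ht => ?_
          have ht0 : 0 ≤ t := spectrum_nonneg_of_nonneg (nonneg_iff_posSemidef.mpr hA) ht
          have hpt : p.eval t ^ 2 ≤ c ^ 2 := sq_le_sq.2 ((hp t ht).trans (le_abs_self c))
          nlinarith
      _ = c ^ 2 • A := by rw [cfc_const_mul .., cfc_id' ℝ A]
  have := (le_iff.mp hle).dotProduct_mulVec_nonneg x
  rwa [sub_mulVec, dotProduct_sub, sub_nonneg, smul_mulVec, dotProduct_smul, smul_eq_mul,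
    ← mulVec_mulVec, ← mulVec_mulVec, star_trivial, dotProduct_mulVec x (aeval A p),
    ← mulVec_transpose, hBT] at this

lemma PosDef.sInf_spectrum_pos [DecidableEq n] [Nonempty n] {A : Matrix n n ℝ} (hA : A.PosDef) :
    0 < sInf (spectrum ℝ A) := by
  rw [hA.isHermitian.spectrum_real_eq_range_eigenvalues]
  obtain ⟨i, hi⟩ := (Set.range_nonempty _).csInf_mem (Set.finite_range hA.isHermitian.eigenvalues)
  exact hi ▸ hA.eigenvalues_pos i

end Matrix

lemma mem_colSpan_iff {m r : ℕ} {W : Matrix (Fin m) (Fin r) ℝ} {v : Fin m → ℝ} :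
    v ∈ colSpan W ↔ ∃ z, W *ᵥ z = v := by
  rw [colSpan, show Set.range Wᵀ = Set.range W.col from rfl, ← range_mulVecLin]
  rfl

lemma sub_aeval_mulVec_mem_krylovVec {m k : ℕ} (A : Matrix (Fin m) (Fin m) ℝ) {p : ℝ[X]}
    (hp0 : p.eval 0 = 1) (hpk : p.natDegree ≤ k) (x : Fin m → ℝ) :
    x - aeval A p *ᵥ x ∈ krylovVec k A (A *ᵥ x) := by
  -- `x - p(A) x = -∑_{i < deg p} pᵢ₊₁ Aⁱ (A x)` since the constant coefficient of `p` is `1`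
  rw [aeval_eq_sum_range, Finset.sum_range_succ', add_mulVec, sum_mulVec, coeff_zero_eq_eval_zero,
    hp0, pow_zero, one_smul, one_mulVec, sub_add_cancel_right]
  refine neg_mem <| Submodule.sum_mem _ fun i hi => ?_
  rw [smul_mulVec]
  refine Submodule.smul_mem _ _ <| Submodule.subset_span ⟨i, ?_, ?_⟩
  · exact (Finset.mem_range.mp hi).trans_le hpk
  · rw [pow_succ, mulVec_mulVec]

/-- When the columns of `W` span `K_k(A, y)`, this is the `k`-th conjugate gradient iterate for
`A x = y` started at `0`. -/
noncomputable def galerkinApprox {n ι : Type*} [Fintype n] [Fintype ι] [DecidableEq ι]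
    (A : Matrix n n ℝ) (W : Matrix n ι ℝ) (y : n → ℝ) : n → ℝ :=
  W *ᵥ ((Wᵀ * A * W)⁻¹ *ᵥ (Wᵀ *ᵥ y))

section Galerkin

variable {n ι : Type*} [Fintype n] [Fintype ι] [DecidableEq ι]
  {A : Matrix n n ℝ} {W : Matrix n ι ℝ} {x y : n → ℝ}

lemma dotProduct_galerkinApprox_of_transpose_mulVec_eq {c : ℝ} {i : ι}
    (hWy : Wᵀ *ᵥ y = c • Pi.single i 1) :
    y ⬝ᵥ galerkinApprox A W y = c ^ 2 * (Wᵀ * A * W)⁻¹ i i := by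
  rw [galerkinApprox, dotProduct_mulVec, ← mulVec_transpose, hWy]
  simp [mulVec_smul, sq, mul_assoc]

lemma dotProduct_mulVec_sub_galerkinApprox (hT : IsUnit (Wᵀ * A * W).det) (hx : A *ᵥ x = y)
    (z : ι → ℝ) : (W *ᵥ z) ⬝ᵥ (A *ᵥ (x - galerkinApprox A W y)) = 0 := by
  have hres : Wᵀ *ᵥ (A *ᵥ galerkinApprox A W y) = Wᵀ *ᵥ y := by
    rw [galerkinApprox, mulVec_mulVec, mulVec_mulVec, mulVec_mulVec,
      mul_nonsing_inv _ hT, one_mulVec]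
  rw [mulVec_sub, hx, dotProduct_comm, dotProduct_mulVec, ← mulVec_transpose, mulVec_sub, hres,
    sub_self, zero_dotProduct]

lemma dotProduct_sub_dotProduct_galerkinApprox (hA : A.IsHermitian)
    (hT : IsUnit (Wᵀ * A * W).det) (hx : A *ᵥ x = y) :
    y ⬝ᵥ x - y ⬝ᵥ galerkinApprox A W y =
      (x - galerkinApprox A W y) ⬝ᵥ (A *ᵥ (x - galerkinApprox A W y)) := by
  have h := dotProduct_mulVec_sub_galerkinApprox hT hx ((Wᵀ * A * W)⁻¹ *ᵥ (Wᵀ *ᵥ y))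
  rw [← galerkinApprox] at h
  rw [sub_dotProduct, h, sub_zero, hA.dotProduct_mulVec_comm x, hx, sub_dotProduct,
    dotProduct_comm x, dotProduct_comm (galerkinApprox A W y)]

lemma dotProduct_mulVec_galerkin_error_le (hA : A.PosSemidef) (hT : IsUnit (Wᵀ * A * W).det)
    (hx : A *ᵥ x = y) (z : ι → ℝ) :
    (x - galerkinApprox A W y) ⬝ᵥ (A *ᵥ (x - galerkinApprox A W y)) ≤
      (x - W *ᵥ z) ⬝ᵥ (A *ᵥ (x - W *ᵥ z)) := by
  have h := dotProduct_mulVec_sub_galerkinApprox hT hx ((Wᵀ * A * W)⁻¹ *ᵥ (Wᵀ *ᵥ y) - z)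
  rw [mulVec_sub, ← galerkinApprox] at h
  convert hA.dotProduct_mulVec_le_add h using 3 <;> abel

end Galerkin

theorem dotProduct_mulVec_galerkin_error_le_condNum {m k : ℕ} {A : Matrix (Fin m) (Fin m) ℝ}
    (hA : A.PosDef) {W : Matrix (Fin m) (Fin k) ℝ} (hT : IsUnit (Wᵀ * A * W).det)
    {x y : Fin m → ℝ} (hx : A *ᵥ x = y) (hK : krylovVec k A y ≤ colSpan W) :
    (x - galerkinApprox A W y) ⬝ᵥ (A *ᵥ (x - galerkinApprox A W y)) ≤
      4 * ((√(condNum A) - 1) / (√(condNum A) + 1)) ^ (2 * k) * (x ⬝ᵥ (A *ᵥ x)) := by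
  subst hx
  rcases isEmpty_or_nonempty (Fin m) with hm | hm
  · simp [Subsingleton.elim x 0]
  have hsub : spectrum ℝ A ⊆ Set.Icc _ _ := A.finite_real_spectrum.isBounded.subset_Icc_sInf_sSup
  obtain ⟨t, ht⟩ : (spectrum ℝ A).Nonempty :=
    hA.isHermitian.spectrum_real_eq_range_eigenvalues ▸ Set.range_nonempty _
  obtain ⟨p, hpk, hp0, hp⟩ :=
    exists_poly_eval_zero_eq_one_abs_le k hA.sInf_spectrum_pos ((hsub ht).1.trans (hsub ht).2)
  obtain ⟨z, hz⟩ := mem_colSpan_iff.mp (hK (sub_aeval_mulVec_mem_krylovVec A hp0 hpk x))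
  calc _ ≤ (x - W *ᵥ z) ⬝ᵥ (A *ᵥ (x - W *ᵥ z)) :=
        dotProduct_mulVec_galerkin_error_le hA.posSemidef hT rfl z
    _ = (aeval A p *ᵥ x) ⬝ᵥ (A *ᵥ (aeval A p *ᵥ x)) := by rw [hz, sub_sub_cancel]
    _ ≤ _ := hA.posSemidef.dotProduct_aeval_mulVec_le p (fun t ht => hp t (hsub ht)) x
    _ = _ := by rw [condNum]; ring

theorem stmt0_general {m k : ℕ} [NeZero k]
    (A : Matrix (Fin m) (Fin m) ℝ) (hA : A.PosDef)
    (y : Fin m → ℝ)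
    (W : Matrix (Fin m) (Fin k) ℝ) (hW : Wᵀ * W = 1)
    (hspan : colSpan W = krylovVec k A y)
    (hWy : Wᵀ *ᵥ y = euclNorm y • (Pi.single (0 : Fin k) (1 : ℝ) : Fin k → ℝ)) :
    0 ≤ (y ⬝ᵥ (A⁻¹ *ᵥ y) - euclNorm y ^ 2 * (Wᵀ * A * W)⁻¹ 0 0) / (y ⬝ᵥ (A⁻¹ *ᵥ y)) ∧
      (y ⬝ᵥ (A⁻¹ *ᵥ y) - euclNorm y ^ 2 * (Wᵀ * A * W)⁻¹ 0 0) / (y ⬝ᵥ (A⁻¹ *ᵥ y)) ≤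
        4 * ((Real.sqrt (condNum A) - 1) / (Real.sqrt (condNum A) + 1)) ^ (2 * k) := by
  set x := A⁻¹ *ᵥ y
  have hx : A *ᵥ x = y := by
    rw [mulVec_mulVec, mul_nonsing_inv _ ((isUnit_iff_isUnit_det A).mp hA.isUnit), one_mulVec]
  have hT : IsUnit (Wᵀ * A * W).det := by
    have hW' : Function.Injective W.mulVec :=
      Function.LeftInverse.injective (g := Wᵀ.mulVec) fun z => by rw [mulVec_mulVec, hW, one_mulVec]
    have hTpos := hA.conjTranspose_mul_mul_same hW'
    rw [conjTranspose_eq_transpose_of_trivial] at hTpos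
    exact (isUnit_iff_isUnit_det _).mp hTpos.isUnit
  have hnum : y ⬝ᵥ x - euclNorm y ^ 2 * (Wᵀ * A * W)⁻¹ 0 0 =
      (x - galerkinApprox A W y) ⬝ᵥ (A *ᵥ (x - galerkinApprox A W y)) := by
    rw [← dotProduct_galerkinApprox_of_transpose_mulVec_eq hWy,
      dotProduct_sub_dotProduct_galerkinApprox hA.isHermitian hT hx]
  have hden : y ⬝ᵥ x = x ⬝ᵥ (A *ᵥ x) := by rw [hx, dotProduct_comm]
  have hquad (v : Fin m → ℝ) : 0 ≤ v ⬝ᵥ (A *ᵥ v) := by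
    simpa using hA.posSemidef.dotProduct_mulVec_nonneg v
  rw [hnum, hden]
  refine ⟨div_nonneg (hquad _) (hquad x), div_le_of_le_mul₀ (hquad x) ?_ ?_⟩
  · rw [pow_mul]; positivity
  · exact dotProduct_mulVec_galerkin_error_le_condNum hA hT hx hspan.ge

/-- CG-type error bound for the Krylov approximation of `yᵀ A⁻¹ y`. -/
theorem stmt0 {m k : ℕ} [NeZero k]
    (A : Matrix (Fin m) (Fin m) ℝ) (hA : A.PosDef)
    (y : Fin m → ℝ) (hy : y ≠ 0)
    (W : Matrix (Fin m) (Fin k) ℝ) (hW : Wᵀ * W = 1)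
    (hspan : colSpan W = krylovVec k A y)
    (hcol : Wᵀ 0 = (euclNorm y)⁻¹ • y)
    (hWy : Wᵀ *ᵥ y = euclNorm y • (Pi.single (0 : Fin k) (1 : ℝ) : Fin k → ℝ)) :
    0 ≤ (y ⬝ᵥ (A⁻¹ *ᵥ y) - euclNorm y ^ 2 * (Wᵀ * A * W)⁻¹ 0 0) / (y ⬝ᵥ (A⁻¹ *ᵥ y)) ∧
      (y ⬝ᵥ (A⁻¹ *ᵥ y) - euclNorm y ^ 2 * (Wᵀ * A * W)⁻¹ 0 0) / (y ⬝ᵥ (A⁻¹ *ᵥ y)) ≤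
        4 * ((Real.sqrt (condNum A) - 1) / (Real.sqrt (condNum A) + 1)) ^ (2 * k) :=
  stmt0_general A hA y W hW hspan hWy
end

section
/- Let A ∈ ℝ^{m×m} be symmetric positive definite, let y ∈ ℝ^m be nonzero, and let W ∈ ℝ^{m×r} have orthonormal columns with Wᵀ y = ‖y‖₂ e₁. Set T = Wᵀ A W, x = A⁻¹ y, and x̂ = ‖y‖₂ W T⁻¹ e₁. Then yᵀ A⁻¹ y − ‖y‖₂² (T⁻¹)₁₁ = ‖x − x̂‖_A², where (T⁻¹)₁₁ = e₁ᵀ T⁻¹ e₁. In particular, yᵀ A⁻¹ y − ‖y‖₂² (T⁻¹)₁₁ ≥ 0. -/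
open Matrix

/-!
Put `x = A⁻¹ y`, `T = Wᵀ A W` and `x̂ = W T⁻¹ Wᵀ y`; since `Wᵀ y = ‖y‖₂ e₁`, this `x̂` is the
approximation of the statement. Galerkin orthogonality `Wᵀ A x̂ = Wᵀ y = Wᵀ A x` reduces every
cross term of `‖x - x̂‖_A²` to `(Wᵀ y)ᵀ T⁻¹ (Wᵀ y) = ‖y‖₂² (T⁻¹)₁₁`, which leaves
`yᵀ A⁻¹ y - ‖y‖₂² (T⁻¹)₁₁`.
-/

namespace Matrix

variable {n k R : Type*} [Fintype n] [Fintype k] [CommRing R]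

theorem mulVec_dotProduct_eq_dotProduct_transpose_mulVec (W : Matrix n k R) (u : k → R)
    (z : n → R) : (W *ᵥ u) ⬝ᵥ z = u ⬝ᵥ (Wᵀ *ᵥ z) := by
  rw [dotProduct_comm, dotProduct_mulVec, mulVec_transpose, dotProduct_comm]

variable [DecidableEq n] [DecidableEq k]

theorem dotProduct_mulVec_galerkin_error {A : Matrix n n R} (hA : A.IsSymm)
    (hAdet : IsUnit A.det) {W : Matrix n k R} (hTdet : IsUnit (Wᵀ * A * W).det) (y : n → R) :
    (A⁻¹ *ᵥ y - W *ᵥ ((Wᵀ * A * W)⁻¹ *ᵥ (Wᵀ *ᵥ y))) ⬝ᵥ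
        A *ᵥ (A⁻¹ *ᵥ y - W *ᵥ ((Wᵀ * A * W)⁻¹ *ᵥ (Wᵀ *ᵥ y))) =
      y ⬝ᵥ (A⁻¹ *ᵥ y) - (Wᵀ *ᵥ y) ⬝ᵥ ((Wᵀ * A * W)⁻¹ *ᵥ (Wᵀ *ᵥ y)) := by
  set x := A⁻¹ *ᵥ y
  set u := (Wᵀ * A * W)⁻¹ *ᵥ (Wᵀ *ᵥ y)
  have hAx : A *ᵥ x = y := by rw [mulVec_mulVec, mul_nonsing_inv _ hAdet, one_mulVec]
  have hgalerkin : Wᵀ *ᵥ (A *ᵥ (W *ᵥ u)) = Wᵀ *ᵥ y := by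
    rw [mulVec_mulVec, mulVec_mulVec, mulVec_mulVec, mul_nonsing_inv _ hTdet, one_mulVec]
  have hxAx : x ⬝ᵥ A *ᵥ x = y ⬝ᵥ x := by rw [hAx, dotProduct_comm]
  have hxAWu : x ⬝ᵥ A *ᵥ (W *ᵥ u) = (Wᵀ *ᵥ y) ⬝ᵥ u := by
    rw [dotProduct_mulVec, ← mulVec_transpose, hA.eq, hAx, dotProduct_comm,
      mulVec_dotProduct_eq_dotProduct_transpose_mulVec, dotProduct_comm]
  have hWuAx : (W *ᵥ u) ⬝ᵥ A *ᵥ x = (Wᵀ *ᵥ y) ⬝ᵥ u := by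
    rw [hAx, mulVec_dotProduct_eq_dotProduct_transpose_mulVec, dotProduct_comm]
  have hWuAWu : (W *ᵥ u) ⬝ᵥ A *ᵥ (W *ᵥ u) = (Wᵀ *ᵥ y) ⬝ᵥ u := by
    rw [mulVec_dotProduct_eq_dotProduct_transpose_mulVec, hgalerkin, dotProduct_comm]
  rw [mulVec_sub, dotProduct_sub, sub_dotProduct, sub_dotProduct, hxAx, hxAWu, hWuAx, hWuAWu]
  ring

end Matrix

theorem anorm_sq {m : ℕ} {A : Matrix (Fin m) (Fin m) ℝ} (hA : A.PosSemidef) (v : Fin m → ℝ) :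
    anorm A v ^ 2 = v ⬝ᵥ A *ᵥ v :=
  Real.sq_sqrt (by simpa using hA.dotProduct_mulVec_nonneg v)

theorem stmt1_general {m r : ℕ} [NeZero r]
    (A : Matrix (Fin m) (Fin m) ℝ) (hA : A.PosDef)
    (y : Fin m → ℝ)
    (W : Matrix (Fin m) (Fin r) ℝ) (hW : Wᵀ * W = 1)
    (hWy : Wᵀ *ᵥ y = euclNorm y • (Pi.single (0 : Fin r) (1 : ℝ) : Fin r → ℝ)) :
    y ⬝ᵥ (A⁻¹ *ᵥ y) - euclNorm y ^ 2 * (Wᵀ * A * W)⁻¹ 0 0 =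
      anorm A (A⁻¹ *ᵥ y -
        euclNorm y • (W *ᵥ ((Wᵀ * A * W)⁻¹ *ᵥ (Pi.single (0 : Fin r) (1 : ℝ) : Fin r → ℝ)))) ^ 2 ∧
    0 ≤ y ⬝ᵥ (A⁻¹ *ᵥ y) - euclNorm y ^ 2 * (Wᵀ * A * W)⁻¹ 0 0 := by
  have hWinj : Function.Injective W.mulVec :=
    Function.LeftInverse.injective (g := Wᵀ.mulVec) fun z => by
      rw [mulVec_mulVec, hW, one_mulVec]
  have hT : (Wᵀ * A * W).PosDef := by simpa using hA.conjTranspose_mul_mul_same hWinj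
  have hxhat : euclNorm y • (W *ᵥ ((Wᵀ * A * W)⁻¹ *ᵥ Pi.single 0 1)) =
      W *ᵥ ((Wᵀ * A * W)⁻¹ *ᵥ (Wᵀ *ᵥ y)) := by
    rw [hWy, mulVec_smul, mulVec_smul]
  have hcorr : euclNorm y ^ 2 * (Wᵀ * A * W)⁻¹ 0 0 =
      (Wᵀ *ᵥ y) ⬝ᵥ ((Wᵀ * A * W)⁻¹ *ᵥ (Wᵀ *ᵥ y)) := by
    simp [hWy, mulVec_smul, mulVec_single, sq, mul_assoc]
  have hgalerkin := dotProduct_mulVec_galerkin_error (isHermitian_iff_isSymm.mp hA.isHermitian)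
    ((isUnit_iff_isUnit_det A).mp hA.isUnit) ((isUnit_iff_isUnit_det _).mp hT.isUnit) y
  rw [hcorr, hxhat, ← hgalerkin, ← anorm_sq hA.posSemidef]
  exact ⟨rfl, sq_nonneg _⟩

/-- the residual of the quadratic form approximation equals the squared
`A`-norm error of the corresponding Galerkin/CG approximation; in particular it is
nonnegative. -/
theorem stmt1 {m r : ℕ} [NeZero r]
    (A : Matrix (Fin m) (Fin m) ℝ) (hA : A.PosDef)
    (y : Fin m → ℝ) (hy : y ≠ 0)
    (W : Matrix (Fin m) (Fin r) ℝ) (hW : Wᵀ * W = 1)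
    (hWy : Wᵀ *ᵥ y = euclNorm y • (Pi.single (0 : Fin r) (1 : ℝ) : Fin r → ℝ)) :
    y ⬝ᵥ (A⁻¹ *ᵥ y) - euclNorm y ^ 2 * (Wᵀ * A * W)⁻¹ 0 0 =
      anorm A (A⁻¹ *ᵥ y -
        euclNorm y • (W *ᵥ ((Wᵀ * A * W)⁻¹ *ᵥ (Pi.single (0 : Fin r) (1 : ℝ) : Fin r → ℝ)))) ^ 2 ∧
    0 ≤ y ⬝ᵥ (A⁻¹ *ᵥ y) - euclNorm y ^ 2 * (Wᵀ * A * W)⁻¹ 0 0 :=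
  stmt1_general A hA y W hW hWy
end

section
/- Let A ∈ ℝ^{m×m}, y ∈ ℝ^m, Ω ∈ ℝ^{m×n_Ω}, and let s ≤ k be nonnegative integers. Let X ∈ ℝ^{m×m} be a matrix whose range is contained in K_{s+1}(A, Ω) and such that I + X is invertible, and set P⁻¹ = I + X. Then the Krylov subspace K_{k−s}(P⁻¹ A, P⁻¹ y) is contained in the augmented Krylov subspace K_k(A, [y, Ω]). -/
open Matrix

lemma col_mem_krylov {m b : ℕ} {t j : ℕ} (hj : j < t) (A : Matrix (Fin m) (Fin m) ℝ)
    (Z : Matrix (Fin m) (Fin b) ℝ) (i : Fin b) :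
    (A ^ j * Z)ᵀ i ∈ krylov t A Z :=
  Submodule.subset_span (Set.mem_iUnion₂.mpr ⟨j, Finset.mem_range.mpr hj, Set.mem_range_self i⟩)

lemma krylov_mono {m b : ℕ} {t t' : ℕ} (h : t ≤ t') (A : Matrix (Fin m) (Fin m) ℝ)
    (Z : Matrix (Fin m) (Fin b) ℝ) : krylov t A Z ≤ krylov t' A Z := by
  apply Submodule.span_mono
  intro v hv
  simp only [Set.mem_iUnion₂] at hv ⊢
  obtain ⟨j, hj, hm⟩ := hv
  exact ⟨j, Finset.mem_range.mpr (lt_of_lt_of_le (Finset.mem_range.mp hj) h), hm⟩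

lemma pow_mulVec_mem_krylovVec {m : ℕ} {t j : ℕ} (hj : j < t)
    (A : Matrix (Fin m) (Fin m) ℝ) (y : Fin m → ℝ) :
    (A ^ j) *ᵥ y ∈ krylovVec t A y :=
  Submodule.subset_span ⟨j, hj, rfl⟩

lemma mulVec_col {m b : ℕ} (A : Matrix (Fin m) (Fin m) ℝ) (W : Matrix (Fin m) (Fin b) ℝ)
    (i : Fin b) : A *ᵥ Wᵀ i = (A * W)ᵀ i := by
  funext r
  simp [Matrix.mulVec, Matrix.mul_apply, dotProduct, Matrix.transpose_apply]

lemma mulVec_krylov {m b : ℕ} {t : ℕ} (A : Matrix (Fin m) (Fin m) ℝ)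
    (Z : Matrix (Fin m) (Fin b) ℝ) {w : Fin m → ℝ} (hw : w ∈ krylov t A Z) :
    A *ᵥ w ∈ krylov (t + 1) A Z := by
  have : Submodule.map A.mulVecLin (krylov t A Z) ≤ krylov (t + 1) A Z := by
    rw [krylov, Submodule.map_span, Submodule.span_le]
    rintro _ ⟨v, hv, rfl⟩
    simp only [Set.mem_iUnion₂] at hv
    obtain ⟨j, hj, i, rfl⟩ := hv
    have : A.mulVecLin ((A ^ j * Z)ᵀ i) = (A ^ (j + 1) * Z)ᵀ i := by
      rw [Matrix.mulVecLin_apply, mulVec_col, ← Matrix.mul_assoc, ← pow_succ']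
    rw [this]
    exact col_mem_krylov (by exact Nat.succ_lt_succ (Finset.mem_range.mp hj)) A Z i
  exact this ⟨w, hw, rfl⟩

lemma mulVec_krylovVec {m : ℕ} {t : ℕ} (A : Matrix (Fin m) (Fin m) ℝ)
    (y : Fin m → ℝ) {w : Fin m → ℝ} (hw : w ∈ krylovVec t A y) :
    A *ᵥ w ∈ krylovVec (t + 1) A y := by
  have : Submodule.map A.mulVecLin (krylovVec t A y) ≤ krylovVec (t + 1) A y := by
    rw [krylovVec, Submodule.map_span, Submodule.span_le]
    rintro _ ⟨v, ⟨j, hj, rfl⟩, rfl⟩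
    have : A.mulVecLin ((A ^ j) *ᵥ y) = (A ^ (j + 1)) *ᵥ y := by
      rw [Matrix.mulVecLin_apply, Matrix.mulVec_mulVec, ← pow_succ']
    rw [this]
    exact pow_mulVec_mem_krylovVec (Nat.succ_lt_succ hj) A y
  exact this ⟨w, hw, rfl⟩

lemma krylovVec_mono {m : ℕ} {t t' : ℕ} (h : t ≤ t') (A : Matrix (Fin m) (Fin m) ℝ)
    (y : Fin m → ℝ) : krylovVec t A y ≤ krylovVec t' A y := by
  apply Submodule.span_mono
  rintro _ ⟨j, hj, rfl⟩
  exact ⟨j, lt_of_lt_of_le hj h, rfl⟩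

lemma X_mulVec_mem_colSpan {m : ℕ} (X : Matrix (Fin m) (Fin m) ℝ) (v : Fin m → ℝ) :
    X *ᵥ v ∈ colSpan X := by
  have : X *ᵥ v = ∑ c : Fin m, v c • Xᵀ c := by
    funext r
    simp [Matrix.mulVec, dotProduct, Matrix.transpose_apply, mul_comm]
  rw [this]
  exact Submodule.sum_mem _ fun c _ =>
    Submodule.smul_mem _ _ (Submodule.subset_span (Set.mem_range_self c))

/-- with `P⁻¹ = I + X` and `range(X) ⊆ K_{s+1}(A, Ω)`, the Krylov subspace
`K_{k-s}(P⁻¹A, P⁻¹y)` is contained in the augmented Krylov subspace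
`K_k(A, [y, Ω]) = K_k(A, y) + K_k(A, Ω)`. -/
theorem stmt5 {m nΩ s k : ℕ} (hsk : s ≤ k)
    (A : Matrix (Fin m) (Fin m) ℝ) (y : Fin m → ℝ)
    (Ω : Matrix (Fin m) (Fin nΩ) ℝ)
    (X : Matrix (Fin m) (Fin m) ℝ)
    (hXrange : colSpan X ≤ krylov (s + 1) A Ω)
    (hinv : IsUnit (1 + X)) :
    krylovVec (k - s) ((1 + X) * A) ((1 + X) *ᵥ y) ≤ krylovVec k A y ⊔ krylov k A Ω := by
  rw [krylovVec, Submodule.span_le]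
  rintro _ ⟨j, hj, rfl⟩
  have key : ∀ i : ℕ, (((1 + X) * A) ^ i) *ᵥ ((1 + X) *ᵥ y) ∈
      krylovVec (i + 1) A y ⊔ krylov (i + s + 1) A Ω := by
    intro i
    induction i with
    | zero =>
      simp only [pow_zero, Matrix.one_mulVec, Matrix.add_mulVec, Matrix.one_mulVec]
      refine Submodule.add_mem _ ?_ ?_
      · exact Submodule.mem_sup_left (by
          have := pow_mulVec_mem_krylovVec (t := 1) (j := 0) Nat.zero_lt_one A y
          simpa using this)
      · have h0 : (0 : ℕ) + s + 1 = s + 1 := by omega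
        rw [h0]
        exact Submodule.mem_sup_right (hXrange (X_mulVec_mem_colSpan X y))
    | succ i ih =>
      have step : (((1 + X) * A) ^ (i + 1)) *ᵥ ((1 + X) *ᵥ y)
          = A *ᵥ ((((1 + X) * A) ^ i) *ᵥ ((1 + X) *ᵥ y))
            + X *ᵥ (A *ᵥ ((((1 + X) * A) ^ i) *ᵥ ((1 + X) *ᵥ y))) := by
        rw [pow_succ', ← Matrix.mulVec_mulVec, ← Matrix.mulVec_mulVec,
          Matrix.add_mulVec, Matrix.one_mulVec]
      rw [step]
      have hidx : i + 1 + s + 1 = i + s + 1 + 1 := by omega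
      rw [hidx]
      refine Submodule.add_mem _ ?_ (Submodule.mem_sup_right ?_)
      · obtain ⟨u, hu, v, hv, huv⟩ := Submodule.mem_sup.mp ih
        have : A *ᵥ ((((1 + X) * A) ^ i) *ᵥ ((1 + X) *ᵥ y)) = A *ᵥ u + A *ᵥ v := by
          rw [← Matrix.mulVec_add, huv]
        rw [this]
        exact Submodule.add_mem _
          (Submodule.mem_sup_left (mulVec_krylovVec A y hu))
          (Submodule.mem_sup_right (mulVec_krylov A Ω hv))
      · exact krylov_mono (by omega) A Ω (hXrange (X_mulVec_mem_colSpan X _))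
  have hj1 : j + 1 ≤ k := by omega
  have hj2 : j + s + 1 ≤ k := by omega
  exact SetLike.le_def.mp (sup_le_sup (krylovVec_mono hj1 A y) (krylov_mono hj2 A Ω)) (key j)
end

section
/- Let A ∈ ℝ^{m×m} be symmetric positive semidefinite. Let Q ∈ ℝ^{m×ℓ} and Q̂ ∈ ℝ^{m×ℓ̂} have orthonormal columns, with ℓ ≤ ℓ̂ ≤ m and range(Q) ⊆ range(Q̂). Then for every i = 1, …, m, the i-th largest eigenvalue of Q Qᵀ A Q Qᵀ is at most the i-th largest eigenvalue of Q̂ Q̂ᵀ A Q̂ Q̂ᵀ. -/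
open Matrix

/-!
With `P = Q Qᵀ` and `P̂ = Q̂ Q̂ᵀ`, the inclusion of ranges gives `P P̂ = P̂ P = P`, so
`P A P = P (P̂ A P̂) P` is the compression of the positive semidefinite matrix `B = P̂ A P̂` by an
orthogonal projection. Such a compression lowers every sorted eigenvalue, by a Courant–Fischer
count: the `i + 1` top eigenvectors of `P B P` span a space containing a nonzero `v` with `P v`
orthogonal to the `i` top eigenvectors of `B`, and then
`λᵢ(PBP) ‖v‖² ≤ ⟪v, PBP v⟫ = ⟪Pv, B Pv⟫ ≤ λᵢ(B) ‖Pv‖² ≤ λᵢ(B) ‖v‖²`,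
the last step because `λᵢ(B) ≥ 0`.
-/

theorem Module.exists_ne_zero_forall_lt_forall_gt {K E : Type*} [Field K] [AddCommGroup E]
    [Module K E] [FiniteDimensional K E] {m : ℕ} (hE : Module.finrank K E = m)
    (f g : Fin m → E →ₗ[K] K) (i : Fin m) :
    ∃ v ≠ 0, (∀ j < i, f j v = 0) ∧ ∀ j, i < j → g j v = 0 := by
  classical
  let Ψ : E →ₗ[K] ({j : Fin m // j ≠ i} → K) :=
    LinearMap.pi fun j => if j.1 < i then f j else g j
  have hdim : Module.finrank K ({j : Fin m // j ≠ i} → K) < Module.finrank K E := by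
    rw [Module.finrank_fintype_fun_eq_card, Fintype.card_subtype_compl, Fintype.card_fin,
      Fintype.card_unique, hE]
    have := i.pos
    omega
  obtain ⟨v, hv, hv0⟩ := (Submodule.ne_bot_iff _).mp (LinearMap.ker_ne_bot_of_finrank_lt hdim)
  have hΨv (j : Fin m) (hj : j ≠ i) : Ψ v ⟨j, hj⟩ = 0 := congrFun (LinearMap.mem_ker.mp hv) _
  refine ⟨v, hv0, fun j hj => ?_, fun j hj => ?_⟩
  · simpa [Ψ, hj] using hΨv j hj.ne
  · simpa [Ψ, hj.not_gt] using hΨv j hj.ne'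

theorem OrthonormalBasis.sum_dotProduct_smul {m : ℕ}
    (b : OrthonormalBasis (Fin m) ℝ (EuclideanSpace ℝ (Fin m))) (v : Fin m → ℝ) :
    ∑ j, ((b j : Fin m → ℝ) ⬝ᵥ v) • (b j : Fin m → ℝ) = v := by
  simpa [EuclideanSpace.inner_eq_star_dotProduct, dotProduct_comm] using
    congrArg WithLp.ofLp (b.sum_repr' (WithLp.toLp 2 v))

theorem OrthonormalBasis.dotProduct_mulVec_eq_sum {m : ℕ}
    (b : OrthonormalBasis (Fin m) ℝ (EuclideanSpace ℝ (Fin m))) {M : Matrix (Fin m) (Fin m) ℝ}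
    {μ : Fin m → ℝ} (hb : ∀ j, M *ᵥ (b j : Fin m → ℝ) = μ j • (b j : Fin m → ℝ))
    (v : Fin m → ℝ) :
    v ⬝ᵥ M *ᵥ v = ∑ j, μ j * ((b j : Fin m → ℝ) ⬝ᵥ v) ^ 2 := by
  nth_rw 2 [← b.sum_dotProduct_smul v]
  simp only [mulVec_sum, mulVec_smul, hb, dotProduct_sum, dotProduct_smul, smul_eq_mul]
  refine Finset.sum_congr rfl fun j _ => ?_
  rw [dotProduct_comm v]
  ring

theorem OrthonormalBasis.dotProduct_self_eq_sum_sq {m : ℕ}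
    (b : OrthonormalBasis (Fin m) ℝ (EuclideanSpace ℝ (Fin m))) (v : Fin m → ℝ) :
    v ⬝ᵥ v = ∑ j, ((b j : Fin m → ℝ) ⬝ᵥ v) ^ 2 := by
  simpa using b.dotProduct_mulVec_eq_sum (M := 1) (μ := 1) (by simp) v

namespace Matrix.IsHermitian

variable {m : ℕ} {M : Matrix (Fin m) (Fin m) ℝ}

noncomputable def sortedEigenvectorBasis (hM : M.IsHermitian) :
    OrthonormalBasis (Fin m) ℝ (EuclideanSpace ℝ (Fin m)) :=
  hM.eigenvectorBasis.reindex (Fin.revPerm.trans (Tuple.sort hM.eigenvalues)).symm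

theorem sortedEigenvectorBasis_apply (hM : M.IsHermitian) (i : Fin m) :
    hM.sortedEigenvectorBasis i = hM.eigenvectorBasis (Tuple.sort hM.eigenvalues i.rev) := by
  simp [sortedEigenvectorBasis]

theorem eigDesc_eq_eigenvalues (hM : M.IsHermitian) (i : Fin m) :
    eigDesc M i = hM.eigenvalues (Tuple.sort hM.eigenvalues i.rev) := by
  rw [eigDesc, dif_pos hM]
  rfl

theorem mulVec_sortedEigenvectorBasis (hM : M.IsHermitian) (i : Fin m) :
    M *ᵥ (hM.sortedEigenvectorBasis i : Fin m → ℝ) =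
      eigDesc M i • (hM.sortedEigenvectorBasis i : Fin m → ℝ) := by
  rw [sortedEigenvectorBasis_apply, eigDesc_eq_eigenvalues hM]
  exact hM.mulVec_eigenvectorBasis _

theorem eigDesc_antitone (hM : M.IsHermitian) : Antitone (eigDesc M) := by
  intro i j hij
  rw [eigDesc_eq_eigenvalues hM, eigDesc_eq_eigenvalues hM]
  exact Tuple.monotone_sort hM.eigenvalues (Fin.rev_le_rev.mpr hij)

theorem eigDesc_mul_dotProduct_self_le (hM : M.IsHermitian) {i : Fin m} {v : Fin m → ℝ}
    (hv : ∀ j, i < j → (hM.sortedEigenvectorBasis j : Fin m → ℝ) ⬝ᵥ v = 0) :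
    eigDesc M i * (v ⬝ᵥ v) ≤ v ⬝ᵥ M *ᵥ v := by
  rw [hM.sortedEigenvectorBasis.dotProduct_mulVec_eq_sum hM.mulVec_sortedEigenvectorBasis,
    hM.sortedEigenvectorBasis.dotProduct_self_eq_sum_sq, Finset.mul_sum]
  refine Finset.sum_le_sum fun j _ => ?_
  rcases le_or_gt j i with hji | hij
  · exact mul_le_mul_of_nonneg_right (hM.eigDesc_antitone hji) (sq_nonneg _)
  · simp [hv j hij]

theorem dotProduct_mulVec_le_eigDesc_mul (hM : M.IsHermitian) {i : Fin m} {v : Fin m → ℝ}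
    (hv : ∀ j < i, (hM.sortedEigenvectorBasis j : Fin m → ℝ) ⬝ᵥ v = 0) :
    v ⬝ᵥ M *ᵥ v ≤ eigDesc M i * (v ⬝ᵥ v) := by
  rw [hM.sortedEigenvectorBasis.dotProduct_mulVec_eq_sum hM.mulVec_sortedEigenvectorBasis,
    hM.sortedEigenvectorBasis.dotProduct_self_eq_sum_sq, Finset.mul_sum]
  refine Finset.sum_le_sum fun j _ => ?_
  rcases lt_or_ge j i with hji | hij
  · simp [hv j hji]
  · exact mul_le_mul_of_nonneg_right (hM.eigDesc_antitone hij) (sq_nonneg _)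

end Matrix.IsHermitian

theorem Matrix.PosSemidef.eigDesc_nonneg {m : ℕ} {M : Matrix (Fin m) (Fin m) ℝ}
    (hM : M.PosSemidef) (i : Fin m) : 0 ≤ eigDesc M i := by
  rw [hM.1.eigDesc_eq_eigenvalues]
  exact hM.eigenvalues_nonneg _

theorem Matrix.mulVec_dotProduct_mulVec_le_of_idempotent {m : ℕ} {P : Matrix (Fin m) (Fin m) ℝ}
    (hP : Pᵀ = P) (hPP : P * P = P) (v : Fin m → ℝ) :
    P *ᵥ v ⬝ᵥ P *ᵥ v ≤ v ⬝ᵥ v := by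
  have hPv : P *ᵥ v ⬝ᵥ P *ᵥ v = v ⬝ᵥ P *ᵥ v := by
    rw [dotProduct_mulVec, ← mulVec_transpose, hP, mulVec_mulVec, hPP, dotProduct_comm]
  have hres : (v - P *ᵥ v) ⬝ᵥ (v - P *ᵥ v) = v ⬝ᵥ v - P *ᵥ v ⬝ᵥ P *ᵥ v := by
    rw [sub_dotProduct, dotProduct_sub, dotProduct_sub, hPv, dotProduct_comm (P *ᵥ v) v]
    ring
  have hnn : 0 ≤ (v - P *ᵥ v) ⬝ᵥ (v - P *ᵥ v) := Finset.sum_nonneg fun _ _ => mul_self_nonneg _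
  linarith

theorem Matrix.PosSemidef.eigDesc_mul_mul_le {m : ℕ} {B P : Matrix (Fin m) (Fin m) ℝ}
    (hB : B.PosSemidef) (hP : Pᵀ = P) (hPP : P * P = P) (i : Fin m) :
    eigDesc (P * B * P) i ≤ eigDesc B i := by
  have hPBP : (P * B * P).IsHermitian := by
    simpa [conjTranspose_eq_transpose_of_trivial, hP] using (hB.mul_mul_conjTranspose_same P).1
  obtain ⟨v, hv0, hvB, hvPBP⟩ := Module.exists_ne_zero_forall_lt_forall_gt
    (Module.finrank_fin_fun ℝ)
    (fun j => dotProductBilin ℝ ℝ (hB.1.sortedEigenvectorBasis j : Fin m → ℝ) ∘ₗ P.mulVecLin)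
    (fun j => dotProductBilin ℝ ℝ (hPBP.sortedEigenvectorBasis j : Fin m → ℝ)) i
  have hquad : v ⬝ᵥ (P * B * P) *ᵥ v = P *ᵥ v ⬝ᵥ B *ᵥ P *ᵥ v := by
    rw [← mulVec_mulVec, ← mulVec_mulVec, dotProduct_mulVec, ← mulVec_transpose, hP]
  have hv : 0 < v ⬝ᵥ v := by
    simpa using dotProduct_star_self_pos_iff.mpr hv0
  refine le_of_mul_le_mul_right ?_ hv
  calc eigDesc (P * B * P) i * (v ⬝ᵥ v) ≤ v ⬝ᵥ (P * B * P) *ᵥ v :=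
        hPBP.eigDesc_mul_dotProduct_self_le (by simpa using hvPBP)
    _ = P *ᵥ v ⬝ᵥ B *ᵥ P *ᵥ v := hquad
    _ ≤ eigDesc B i * (P *ᵥ v ⬝ᵥ P *ᵥ v) :=
        hB.1.dotProduct_mulVec_le_eigDesc_mul (by simpa using hvB)
    _ ≤ eigDesc B i * (v ⬝ᵥ v) :=
        mul_le_mul_of_nonneg_left (mulVec_dotProduct_mulVec_le_of_idempotent hP hPP v)
          (hB.eigDesc_nonneg i)

theorem exists_eq_mul_of_colSpan_le {m r s : ℕ} {Q : Matrix (Fin m) (Fin r) ℝ}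
    {W : Matrix (Fin m) (Fin s) ℝ} (h : colSpan Q ≤ colSpan W) :
    ∃ C : Matrix (Fin s) (Fin r) ℝ, Q = W * C := by
  have hcol (k : Fin r) : ∃ c, W *ᵥ c = Qᵀ k := by
    have : Qᵀ k ∈ LinearMap.range W.mulVecLin := by
      rw [range_mulVecLin]
      exact h (Submodule.subset_span ⟨k, rfl⟩)
    simpa using this
  choose c hc using hcol
  refine ⟨of fun b k => c k b, ?_⟩
  ext a k
  rw [mul_apply, ← transpose_apply Q, ← hc k]
  rfl

theorem mul_transpose_mul_eq_of_colSpan_le {m r s : ℕ} {Q : Matrix (Fin m) (Fin r) ℝ}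
    {W : Matrix (Fin m) (Fin s) ℝ} (hW : Wᵀ * W = 1) (h : colSpan Q ≤ colSpan W) :
    W * Wᵀ * Q = Q := by
  obtain ⟨C, rfl⟩ := exists_eq_mul_of_colSpan_le h
  rw [Matrix.mul_assoc, ← Matrix.mul_assoc Wᵀ, hW, Matrix.one_mul]

theorem stmt6_general {m l lh : ℕ}
    (A : Matrix (Fin m) (Fin m) ℝ) (hA : A.PosSemidef)
    (Q : Matrix (Fin m) (Fin l) ℝ) (hQ : Qᵀ * Q = 1)
    (Qh : Matrix (Fin m) (Fin lh) ℝ) (hQh : Qhᵀ * Qh = 1)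
    (hrange : colSpan Q ≤ colSpan Qh) :
    ∀ i : Fin m,
      eigDesc (Q * Qᵀ * A * (Q * Qᵀ)) i ≤ eigDesc (Qh * Qhᵀ * A * (Qh * Qhᵀ)) i := by
  intro i
  set P := Q * Qᵀ
  set Ph := Qh * Qhᵀ
  have hPh : Phᵀ = Ph := by simp [Ph]
  have hPhP : Ph * P = P := by
    rw [← Matrix.mul_assoc, mul_transpose_mul_eq_of_colSpan_le hQh hrange]
  have hPPh : P * Ph = P := by
    simpa [P, hPh] using congrArg transpose hPhP
  have hB : (Ph * A * Ph).PosSemidef := by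
    simpa [conjTranspose_eq_transpose_of_trivial, hPh] using hA.mul_mul_conjTranspose_same Ph
  have hP : Pᵀ = P := by simp [P]
  have hPP : P * P = P := by
    rw [Matrix.mul_assoc, ← Matrix.mul_assoc Qᵀ, hQ, Matrix.one_mul]
  calc eigDesc (P * A * P) i = eigDesc (P * Ph * A * (Ph * P)) i := by rw [hPPh, hPhP]
    _ = eigDesc (P * (Ph * A * Ph) * P) i := by simp only [Matrix.mul_assoc]
    _ ≤ eigDesc (Ph * A * Ph) i := hB.eigDesc_mul_mul_le hP hPP i

/-- monotonicity of eigenvalues of compressions under enlargement of the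
orthonormal basis. -/
theorem stmt6 {m l lh : ℕ} (hl : l ≤ lh) (hlh : lh ≤ m)
    (A : Matrix (Fin m) (Fin m) ℝ) (hA : A.PosSemidef)
    (Q : Matrix (Fin m) (Fin l) ℝ) (hQ : Qᵀ * Q = 1)
    (Qh : Matrix (Fin m) (Fin lh) ℝ) (hQh : Qhᵀ * Qh = 1)
    (hrange : colSpan Q ≤ colSpan Qh) :
    ∀ i : Fin m,
      eigDesc (Q * Qᵀ * A * (Q * Qᵀ)) i ≤ eigDesc (Qh * Qhᵀ * A * (Qh * Qhᵀ)) i :=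
  stmt6_general A hA Q hQ Qh hQh hrange
end

section
/- Let A ∈ ℝ^{m×m} be symmetric positive semidefinite and let λ > 0. Let W ∈ ℝ^{m×r} and Ŵ ∈ ℝ^{m×r̂} have orthonormal columns with r ≤ r̂ ≤ m and range(W) ⊆ range(Ŵ), and set T = Wᵀ A W and T̂ = Ŵᵀ A Ŵ. Then Trace(log(λ I + W T Wᵀ)) ≤ Trace(log(λ I + Ŵ T̂ Ŵᵀ)) ≤ Trace(log(λ I + A)). -/
/-!
With `P = W Wᵀ` and `Q = Ŵ Ŵᵀ` the orthogonal projections onto the two ranges, `W T Wᵀ = P A P`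
and `Ŵ T̂ Ŵᵀ = Q A Q`; since `P Q = Q P = P`, also `P A P = P (Q A Q) P`. Both inequalities are
therefore instances of `det (λ + P M P) ≤ det (λ + M)` for a projection `P` and `M ≥ 0`. Writing
`M = B²` with `B = √M`, Sylvester's identity `det (λ + X Y) = det (λ + Y X)` turns the left side
into `det (λ + B P B)`, and `B P B ≤ B B = M` in the Loewner order because `P ≤ 1`. Finally the
determinant is monotone on positive definite matrices: if `X ≤ Y` then `X^{-1/2} Y X^{-1/2} ≥ 1`
has all eigenvalues at least `1`.
-/

open Matrix

open scoped MatrixOrder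

namespace Matrix

variable {n : Type*} [DecidableEq n]

theorem posDef_smul_one_add {c : ℝ} (hc : 0 < c) {N : Matrix n n ℝ} (hN : 0 ≤ N) :
    (c • 1 + N).PosDef :=
  (PosDef.one.smul hc).add_posSemidef (nonneg_iff_posSemidef.mp hN)

variable [Fintype n]

theorem one_le_det_of_one_le {M : Matrix n n ℝ} (h : 1 ≤ M) : 1 ≤ M.det := by
  have hM : M.IsHermitian := by
    simpa using (isHermitian_one (n := n) (α := ℝ)).add h.isHermitian
  rw [hM.det_eq_prod_eigenvalues]
  refine Finset.one_le_prod fun i _ => ?_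
  set v := ⇑(hM.eigenvectorBasis i)
  have hv : v ⬝ᵥ v = 1 := by
    have := real_inner_self_eq_norm_sq (hM.eigenvectorBasis i)
    rw [hM.eigenvectorBasis.orthonormal.1 i, EuclideanSpace.inner_eq_star_dotProduct] at this
    simpa using this
  have hquad : 0 ≤ v ⬝ᵥ (M - 1) *ᵥ v := by
    simpa using (le_iff.mp h).dotProduct_mulVec_nonneg v
  rw [sub_mulVec, one_mulVec, dotProduct_sub, hv, sub_nonneg] at hquad
  simpa [hM.eigenvalues_eq i] using hquad

theorem PosDef.det_le_det_of_le {X Y : Matrix n n ℝ} (hX : X.PosDef) (h : X ≤ Y) :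
    X.det ≤ Y.det := by
  set S := CFC.sqrt X
  have hSS : S * S = X := CFC.sqrt_mul_sqrt_self X hX.posSemidef.nonneg
  have hS : IsSelfAdjoint S := IsSelfAdjoint.of_nonneg (CFC.sqrt_nonneg X)
  have hdetS : IsUnit S.det := by
    refine isUnit_iff_ne_zero.mpr fun h0 => hX.det_pos.ne' ?_
    rw [← hSS, det_mul, h0, zero_mul]
  have hSinv : IsSelfAdjoint S⁻¹ := by
    rw [IsSelfAdjoint, star_eq_conjTranspose, conjTranspose_nonsing_inv, ← star_eq_conjTranspose,
      hS.star_eq]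
  have hone : 1 ≤ S⁻¹ * Y * S⁻¹ :=
    calc (1 : Matrix n n ℝ) = S⁻¹ * X * S⁻¹ := by
          rw [← hSS, ← mul_assoc, nonsing_inv_mul _ hdetS, one_mul, mul_nonsing_inv _ hdetS]
      _ ≤ S⁻¹ * Y * S⁻¹ := hSinv.conjugate_le_conjugate h
  have hY : S * (S⁻¹ * Y * S⁻¹) * S = Y := by
    rw [← mul_assoc, ← mul_assoc, mul_nonsing_inv _ hdetS, one_mul, mul_assoc,
      nonsing_inv_mul _ hdetS, mul_one]
  calc X.det = X.det * 1 := (mul_one _).symm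
    _ ≤ X.det * (S⁻¹ * Y * S⁻¹).det :=
      mul_le_mul_of_nonneg_left (one_le_det_of_one_le hone) hX.det_pos.le
    _ = (S * (S⁻¹ * Y * S⁻¹) * S).det := by simp only [det_mul, ← hSS]; ring
    _ = Y.det := by rw [hY]

theorem det_smul_one_add_mul_comm {K : Type*} [Field K] (c : K) (X Y : Matrix n n K) :
    (c • 1 + X * Y).det = (c • 1 + Y * X).det := by
  rcases eq_or_ne c 0 with rfl | hc
  · simp only [zero_smul, zero_add, det_mul, mul_comm]
  · have hscale : ∀ X Y : Matrix n n K, c • 1 + X * Y = c • (1 + (c⁻¹ • X) * Y) := fun X Y => by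
      rw [smul_add, smul_mul, smul_smul, mul_inv_cancel₀ hc, one_smul]
    rw [hscale, hscale, det_smul, det_smul, det_one_add_mul_comm, Matrix.smul_mul,
      Matrix.mul_smul]

theorem det_smul_one_add_conj_le {c : ℝ} (hc : 0 < c) {M P : Matrix n n ℝ} (hM : 0 ≤ M)
    (hP : IsStarProjection P) : (c • 1 + P * M * P).det ≤ (c • 1 + M).det := by
  set B := CFC.sqrt M
  have hBB : B * B = M := CFC.sqrt_mul_sqrt_self M hM
  have hB : IsSelfAdjoint B := IsSelfAdjoint.of_nonneg (CFC.sqrt_nonneg M)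
  have hsylvester : (c • 1 + P * M * P).det = (c • 1 + B * P * B).det := by
    rw [← hBB, show P * (B * B) * P = (P * B) * (B * P) by simp only [Matrix.mul_assoc],
      det_smul_one_add_mul_comm,
      show B * P * (P * B) = B * (P * P) * B by simp only [Matrix.mul_assoc],
      hP.isIdempotentElem.eq]
  have hle : B * P * B ≤ M := by
    simpa [hBB] using hB.conjugate_le_conjugate hP.le_one
  rw [hsylvester]
  exact (posDef_smul_one_add hc (hB.conjugate_nonneg hP.nonneg)).det_le_det_of_le
    (add_le_add_right hle _)

theorem isStarProjection_mul_transpose {m k : Type*} [Fintype m] [Fintype k] [DecidableEq k]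
    {W : Matrix m k ℝ} (hW : Wᵀ * W = 1) : IsStarProjection (W * Wᵀ) where
  isIdempotentElem := by
    rw [IsIdempotentElem, Matrix.mul_assoc, ← Matrix.mul_assoc Wᵀ, hW, Matrix.one_mul]
  isSelfAdjoint := by
    rw [IsSelfAdjoint, star_eq_conjTranspose, conjTranspose_eq_transpose_of_trivial,
      transpose_mul, transpose_transpose]

end Matrix

open Matrix

theorem traceLog_smul_one_add_conj_le {m : ℕ} {c : ℝ} (hc : 0 < c)
    {M P : Matrix (Fin m) (Fin m) ℝ} (hM : 0 ≤ M) (hP : IsStarProjection P) :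
    traceLog (c • 1 + P * M * P) ≤ traceLog (c • 1 + M) :=
  Real.log_le_log (posDef_smul_one_add hc (hP.isSelfAdjoint.conjugate_nonneg hM)).det_pos
    (det_smul_one_add_conj_le hc hM hP)

theorem mul_transpose_mul_of_colSpan_le {m r rh : ℕ} {W : Matrix (Fin m) (Fin r) ℝ}
    {Wh : Matrix (Fin m) (Fin rh) ℝ} (hWh : Whᵀ * Wh = 1) (hrange : colSpan W ≤ colSpan Wh) :
    Wh * Whᵀ * W = W := by
  ext i j
  obtain ⟨x, hx⟩ : Wᵀ j ∈ LinearMap.range Wh.mulVecLin :=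
    (range_mulVecLin Wh).symm ▸ hrange (Submodule.subset_span ⟨j, rfl⟩)
  have hfix : (Wh * Whᵀ) *ᵥ (Wh *ᵥ x) = Wh *ᵥ x := by
    rw [mulVec_mulVec, Matrix.mul_assoc, hWh, Matrix.mul_one]
  rw [show Wh *ᵥ x = Wᵀ j from hx] at hfix
  simpa [mulVec, dotProduct, mul_apply] using congrFun hfix i

theorem stmt7_general {m r rh : ℕ}
    (A : Matrix (Fin m) (Fin m) ℝ) (hA : A.PosSemidef)
    (lam : ℝ) (hlam : 0 < lam)
    (W : Matrix (Fin m) (Fin r) ℝ) (hW : Wᵀ * W = 1)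
    (Wh : Matrix (Fin m) (Fin rh) ℝ) (hWh : Whᵀ * Wh = 1)
    (hrange : colSpan W ≤ colSpan Wh) :
    traceLog (lam • 1 + W * (Wᵀ * A * W) * Wᵀ) ≤
        traceLog (lam • 1 + Wh * (Whᵀ * A * Wh) * Whᵀ) ∧
      traceLog (lam • 1 + Wh * (Whᵀ * A * Wh) * Whᵀ) ≤ traceLog (lam • 1 + A) := by
  have hP := isStarProjection_mul_transpose hW
  have hQ := isStarProjection_mul_transpose hWh
  have hQP : Wh * Whᵀ * (W * Wᵀ) = W * Wᵀ := by
    rw [← Matrix.mul_assoc, mul_transpose_mul_of_colSpan_le hWh hrange]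
  have hPQ : W * Wᵀ * (Wh * Whᵀ) = W * Wᵀ := by
    simpa only [star_mul, hP.isSelfAdjoint.star_eq, hQ.isSelfAdjoint.star_eq]
      using congrArg star hQP
  have hcompress : W * (Wᵀ * A * W) * Wᵀ = W * Wᵀ * (Wh * Whᵀ * A * (Wh * Whᵀ)) * (W * Wᵀ) := by
    rw [show W * Wᵀ * (Wh * Whᵀ * A * (Wh * Whᵀ)) * (W * Wᵀ)
        = W * Wᵀ * (Wh * Whᵀ) * A * (Wh * Whᵀ * (W * Wᵀ)) by simp only [Matrix.mul_assoc],
      hPQ, hQP]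
    simp only [Matrix.mul_assoc]
  have hQAQ : Wh * (Whᵀ * A * Wh) * Whᵀ = Wh * Whᵀ * A * (Wh * Whᵀ) := by
    simp only [Matrix.mul_assoc]
  rw [hcompress, hQAQ]
  exact ⟨traceLog_smul_one_add_conj_le hlam (hQ.isSelfAdjoint.conjugate_nonneg hA.nonneg) hP,
    traceLog_smul_one_add_conj_le hlam hA.nonneg hQ⟩

/-- augmentation does not harm the trace-of-log approximation. -/
theorem stmt7 {m r rh : ℕ} (hr : r ≤ rh) (hrh : rh ≤ m)
    (A : Matrix (Fin m) (Fin m) ℝ) (hA : A.PosSemidef)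
    (lam : ℝ) (hlam : 0 < lam)
    (W : Matrix (Fin m) (Fin r) ℝ) (hW : Wᵀ * W = 1)
    (Wh : Matrix (Fin m) (Fin rh) ℝ) (hWh : Whᵀ * Wh = 1)
    (hrange : colSpan W ≤ colSpan Wh) :
    traceLog (lam • 1 + W * (Wᵀ * A * W) * Wᵀ) ≤
        traceLog (lam • 1 + Wh * (Whᵀ * A * Wh) * Whᵀ) ∧
      traceLog (lam • 1 + Wh * (Whᵀ * A * Wh) * Whᵀ) ≤ traceLog (lam • 1 + A) :=
  stmt7_general A hA lam hlam W hW Wh hWh hrange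
end
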